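/- arXiv:2307.03961 — 4 statements merged into one kernel-verified Lean document; each statement's English description precedes it below -/
import Mathlib

section
/- Let h : ℕ^r → ℕ^s be an integral homomorphism of free commutative monoids, with canonical bases (e_i) of ℕ^r and (f_j) of ℕ^s. Then no basis element f_j divides both h(e_{i₁}) and h(e_{i₂}) for distinct indices i₁ ≠ i₂; equivalently, the supports of the elements h(e_i) ∈ ℕ^s (viewed as functions on the index set of the f_j) are pairwise disjoint. -/
/-!
If `f_j` divides both `u = h e₁` and `v = h e₂`, then `h e₁ + (v - f_j) = h e₂ + (u - f_j)`.
Integrality writes `v - f_j = h a₃ + b` with `e₁ + a₃ = e₂ + a₄`; comparing `i₂`-coordinates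
gives `e₂ ≤ a₃`, hence `v ≤ h a₃ ≤ v - f_j`, which is absurd.
-/

/-- A homomorphism of commutative monoids (written additively) is integral. -/
def IsIntegralHom {M N : Type*} [AddCommMonoid M] [AddCommMonoid N] (h : M →+ N) : Prop :=
  ∀ a₁ a₂ : M, ∀ b₁ b₂ : N, h a₁ + b₁ = h a₂ + b₂ →
    ∃ a₃ a₄ : M, ∃ b : N, b₁ = h a₃ + b ∧ b₂ = h a₄ + b ∧ a₁ + a₃ = a₂ + a₄

theorem Pi.single_le_of_le_apply {ι : Type*} {α : Type*} [DecidableEq ι] [AddMonoid α]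
    [PartialOrder α] [CanonicallyOrderedAdd α] {f : ι → α} {i : ι} {x : α} (hx : x ≤ f i) :
    Pi.single i x ≤ f := by
  intro k
  by_cases hk : k = i
  · subst hk; simpa using hx
  · simp [Pi.single_eq_of_ne hk]

theorem AddMonoidHom.monotone_of_canonicallyOrderedAdd {M N : Type*} [AddCommMonoid M]
    [AddCommMonoid N] [PartialOrder M] [ExistsAddOfLE M] [PartialOrder N] [CanonicallyOrderedAdd N]
    (h : M →+ N) : Monotone h := by
  intro a b hab
  obtain ⟨c, rfl⟩ := exists_add_of_le hab
  rw [map_add]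
  exact le_self_add

namespace IsIntegralHom

variable {M N : Type*} [AddCommMonoid M] [AddCommMonoid N] [PartialOrder N]
  [CanonicallyOrderedAdd N] [Sub N] [OrderedSub N] [AddLeftReflectLE N] {h : M →+ N}

theorem exists_add_eq_add_and_map_add_le (hint : IsIntegralHom h) {a₁ a₂ : M} {d : N}
    (h₁ : d ≤ h a₁) (h₂ : d ≤ h a₂) :
    ∃ a₃ a₄ : M, a₁ + a₃ = a₂ + a₄ ∧ h a₃ + d ≤ h a₂ := by
  have hsum : h a₁ + (h a₂ - d) = h a₂ + (h a₁ - d) := by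
    rw [← add_tsub_assoc_of_le h₂, ← add_tsub_assoc_of_le h₁, add_comm]
  obtain ⟨a₃, a₄, b, hb, -, ha⟩ := hint a₁ a₂ _ _ hsum
  refine ⟨a₃, a₄, ha, ?_⟩
  calc h a₃ + d ≤ h a₃ + b + d := by gcongr; exact le_self_add
    _ = h a₂ := by rw [← hb, tsub_add_cancel_of_le h₂]

end IsIntegralHom

/-- The supports of the images of distinct basis elements under an integral
homomorphism `ℕ^r → ℕ^s` are pairwise disjoint: no `f_j` divides both
`h (e i₁)` and `h (e i₂)`. -/
theorem stmt1 (r s : ℕ) (h : (Fin r → ℕ) →+ (Fin s → ℕ)) (hint : IsIntegralHom h) :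
    ∀ i₁ i₂ : Fin r, i₁ ≠ i₂ → ∀ j : Fin s,
      h (Pi.single i₁ 1) j = 0 ∨ h (Pi.single i₂ 1) j = 0 := by
  intro i₁ i₂ hne j
  by_contra! hj
  obtain ⟨a₃, a₄, ha, hle⟩ := hint.exists_add_eq_add_and_map_add_le (d := Pi.single j 1)
    (Pi.single_le_of_le_apply (Nat.one_le_iff_ne_zero.2 hj.1))
    (Pi.single_le_of_le_apply (Nat.one_le_iff_ne_zero.2 hj.2))
  have he₂ : Pi.single i₂ 1 ≤ a₃ := Pi.single_le_of_le_apply <| by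
    have := congrFun ha i₂
    simp only [Pi.add_apply, Pi.single_eq_same, Pi.single_eq_of_ne (Ne.symm hne)] at this
    omega
  have hj_le : h (Pi.single i₂ 1) + Pi.single j 1 ≤ h (Pi.single i₂ 1) :=
    (add_le_add_left (h.monotone_of_canonicallyOrderedAdd he₂) _).trans hle
  simpa using (add_le_iff_nonpos_right _).1 hj_le j
end

section
/- Let N be a nilpotent endomorphism of a finite-dimensional vector space V over a field of characteristic zero. Then there exists a unique finite increasing filtration W of V such that N(W_m) ⊆ W_{m-2} for all m ∈ ℤ and such that for every k ≥ 0 the map induced by N^k gives an isomorphism gr^W_k V → gr^W_{-k} V. -/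
/-- `W` is the monodromy weight filtration of the nilpotent endomorphism `N`,
centered at `0`: it is increasing, exhaustive and separated, satisfies
`N (W m) ⊆ W (m-2)`, and for every `k ≥ 0` the map induced by `N ^ k` gives an
isomorphism `gr^W_k → gr^W_{-k}` (expressed by the injectivity and surjectivity
conditions on associated graded pieces). -/
def IsWeightFiltration {K V : Type*} [Field K] [AddCommGroup V] [Module K V]
    (N : V →ₗ[K] V) (W : ℤ → Submodule K V) : Prop :=
  Monotone W ∧ (∃ m : ℤ, W m = ⊥) ∧ (∃ m : ℤ, W m = ⊤) ∧
  (∀ m : ℤ, (W m).map N ≤ W (m - 2)) ∧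
  (∀ k : ℕ,
    W (k : ℤ) ⊓ (W (-(k : ℤ) - 1)).comap (N ^ k) ≤ W ((k : ℤ) - 1) ∧
    W (-(k : ℤ)) ≤ W (-(k : ℤ) - 1) ⊔ (W (k : ℤ)).map (N ^ k))

/-
Deligne's inductive construction. Suppose `N ^ (l + 2) = 0`. A weight filtration is then forced
to be `0` below degree `-(l + 1)`, to be `V` above degree `l`, and to satisfy
`W l = ker N ^ (l + 1)` and `W (-(l + 1)) = im N ^ (l + 1)`; in the degrees between, it is exactly
a weight filtration of the endomorphism induced by `N` on `ker N ^ (l + 1) / im N ^ (l + 1)`,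
which is killed by `N ^ (l + 1)`. Conversely, any weight filtration of that subquotient extends
by `0` and `V`. Induction on `l` then gives existence and uniqueness, once it is run on
subquotients `S / T` of `V` from the start: there the kernel and image of `N ^ (l + 1)` become
`S ⊓ T.comap (N ^ (l + 1))` and `T ⊔ S.map (N ^ (l + 1))`.
-/

namespace Submodule

variable {R M : Type*} [Semiring R] [AddCommMonoid M] [Module R M]

theorem map_pow_add (f : Module.End R M) (a b : ℕ) (p : Submodule R M) :
    p.map (f ^ (a + b)) = (p.map (f ^ b)).map (f ^ a) := by
  rw [pow_add, Module.End.mul_eq_comp, map_comp]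

theorem map_pow_succ (f : Module.End R M) (k : ℕ) (p : Submodule R M) :
    p.map (f ^ (k + 1)) = (p.map f).map (f ^ k) := by
  rw [pow_succ, Module.End.mul_eq_comp, map_comp]

theorem map_pow_succ' (f : Module.End R M) (k : ℕ) (p : Submodule R M) :
    p.map (f ^ (k + 1)) = (p.map (f ^ k)).map f := by
  rw [pow_succ', Module.End.mul_eq_comp, map_comp]

theorem map_pow_le_of_map_le {f : Module.End R M} {p : Submodule R M} (h : p.map f ≤ p)
    (k : ℕ) : p.map (f ^ k) ≤ p := by
  induction k with
  | zero => simp [Module.End.one_eq_id]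
  | succ k ih =>
    rw [map_pow_succ]
    exact (map_mono h).trans ih

end Submodule

section Subquotient

variable {R M : Type*} [Semiring R] [AddCommMonoid M] [Module R M]

/-- The weight filtration of `N` on the subquotient `S ⧸ T`, recorded through the preimages
`T ≤ W m ≤ S` of its terms. The conditions have the same shape as in `IsWeightFiltration`
because `W (-k-1)` contains `T`. -/
structure IsSubquotientWeightFiltration (N : Module.End R M) (T S : Submodule R M)
    (W : ℤ → Submodule R M) : Prop where
  mono : Monotone W
  le_apply : ∀ m, T ≤ W m
  apply_le : ∀ m, W m ≤ S
  exists_eq_lower : ∃ m, W m = T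
  exists_eq_upper : ∃ m, W m = S
  map_apply_le : ∀ m, (W m).map N ≤ W (m - 2)
  inf_comap_le : ∀ k : ℕ, W k ⊓ (W (-(k : ℤ) - 1)).comap (N ^ k) ≤ W ((k : ℤ) - 1)
  le_sup_map : ∀ k : ℕ, W (-(k : ℤ)) ≤ W (-(k : ℤ) - 1) ⊔ (W k).map (N ^ k)

def extendFiltration (l : ℕ) (T S : Submodule R M) (W : ℤ → Submodule R M) (m : ℤ) :
    Submodule R M :=
  if m < -((l : ℤ) + 1) then T else if (l : ℤ) < m then S else W m

section

variable {l : ℕ} {T S : Submodule R M} {W : ℤ → Submodule R M}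

theorem extendFiltration_of_lt {m : ℤ} (hm : m < -((l : ℤ) + 1)) :
    extendFiltration l T S W m = T :=
  if_pos hm

theorem extendFiltration_of_gt {m : ℤ} (hm : (l : ℤ) < m) : extendFiltration l T S W m = S := by
  rw [extendFiltration, if_neg (by omega), if_pos hm]

theorem extendFiltration_of_mem {m : ℤ} (hm₁ : -((l : ℤ) + 1) ≤ m) (hm₂ : m ≤ l) :
    extendFiltration l T S W m = W m := by
  rw [extendFiltration, if_neg (by omega), if_neg (by omega)]

end

namespace IsSubquotientWeightFiltration

variable {N : Module.End R M} {T S : Submodule R M} {W : ℤ → Submodule R M}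
  (hW : IsSubquotientWeightFiltration N T S W)
include hW

theorem map_lower_le : T.map N ≤ T := by
  obtain ⟨m, hm⟩ := hW.exists_eq_lower
  calc T.map N = (W m).map N := by rw [hm]
    _ ≤ W (m - 2) := hW.map_apply_le m
    _ ≤ T := hm ▸ hW.mono (by omega)

theorem map_upper_le : S.map N ≤ S := by
  obtain ⟨m, hm⟩ := hW.exists_eq_upper
  calc S.map N = (W m).map N := by rw [hm]
    _ ≤ S := (hW.map_apply_le m).trans (hW.apply_le _)

theorem map_pow_apply_le (k : ℕ) (m : ℤ) : (W m).map (N ^ k) ≤ W (m - 2 * k) := by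
  induction k with
  | zero => simp [Module.End.one_eq_id]
  | succ k ih =>
    rw [Submodule.map_pow_succ']
    calc ((W m).map (N ^ k)).map N ≤ (W (m - 2 * k)).map N := Submodule.map_mono ih
      _ ≤ W (m - 2 * (k + 1 : ℕ)) := by
        convert hW.map_apply_le (m - 2 * k) using 2
        push_cast
        ring

theorem upper_inf_comap_pow_le (a : ℕ) : S ⊓ T.comap (N ^ a) ≤ W (a - 1) := by
  obtain ⟨m, hm⟩ := hW.exists_eq_upper
  refine Nat.decreasingInduction (motive := fun k _ => S ⊓ T.comap (N ^ k) ≤ W (k - 1))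
    (fun k _ ih => ?_) (inf_le_left.trans (hm ▸ hW.mono (by omega))) (le_max_left a (m + 1).toNat)
  intro x ⟨hxS, hxT⟩
  have hNxT : (N ^ (k + 1)) x ∈ T := by
    rw [pow_succ', Module.End.mul_apply]
    exact hW.map_lower_le (Submodule.mem_map_of_mem hxT)
  have hxk : x ∈ W k := by simpa using ih ⟨hxS, hNxT⟩
  exact hW.inf_comap_le k ⟨hxk, hW.le_apply _ hxT⟩

theorem apply_neg_le_lower_sup_map_pow (a : ℕ) : W (-a) ≤ T ⊔ S.map (N ^ a) := by
  obtain ⟨m, hm⟩ := hW.exists_eq_lower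
  refine Nat.decreasingInduction (motive := fun k _ => W (-k) ≤ T ⊔ S.map (N ^ k))
    (fun k _ ih => ?_) (le_sup_of_le_left (hm ▸ hW.mono (by omega))) (le_max_left a (-m).toNat)
  have hmap : S.map (N ^ (k + 1)) ≤ S.map (N ^ k) := by
    rw [Submodule.map_pow_add N k 1, pow_one]
    exact Submodule.map_mono hW.map_upper_le
  calc W (-k) ≤ W (-k - 1) ⊔ (W k).map (N ^ k) := hW.le_sup_map k
    _ ≤ (T ⊔ S.map (N ^ k)) ⊔ S.map (N ^ k) := by
      gcongr
      · convert ih.trans (sup_le_sup_left hmap T) using 2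
        push_cast
        ring
      · exact hW.apply_le k
    _ = T ⊔ S.map (N ^ k) := by rw [sup_assoc, sup_idem]

theorem apply_eq_upper {n : ℕ} (hn : S.map (N ^ n) ≤ T) {m : ℤ} (hm : n - 1 ≤ m) :
    W m = S := by
  refine le_antisymm (hW.apply_le m) ?_
  calc S = S ⊓ T.comap (N ^ n) := (inf_eq_left.mpr (Submodule.map_le_iff_le_comap.mp hn)).symm
    _ ≤ W (n - 1) := hW.upper_inf_comap_pow_le n
    _ ≤ W m := hW.mono hm

theorem apply_eq_lower {n : ℕ} (hn : S.map (N ^ n) ≤ T) {m : ℤ} (hm : m ≤ -n) :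
    W m = T := by
  refine le_antisymm ?_ (hW.le_apply m)
  calc W m ≤ W (-n) := hW.mono hm
    _ ≤ T ⊔ S.map (N ^ n) := hW.apply_neg_le_lower_sup_map_pow n
    _ = T := sup_eq_left.mpr hn

variable {l : ℕ} (hl : S.map (N ^ (l + 2)) ≤ T)
include hl

theorem apply_eq_upper_inf_comap : W l = S ⊓ T.comap (N ^ (l + 1)) := by
  refine le_antisymm (le_inf (hW.apply_le l) ?_) (by simpa using hW.upper_inf_comap_pow_le (l + 1))
  rw [← Submodule.map_le_iff_le_comap]
  calc (W l).map (N ^ (l + 1)) ≤ W (l - 2 * (l + 1 : ℕ)) := hW.map_pow_apply_le _ _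
    _ = T := hW.apply_eq_lower hl (by push_cast; omega)

theorem apply_eq_lower_sup_map : W (-(l + 1)) = T ⊔ S.map (N ^ (l + 1)) := by
  refine le_antisymm (by simpa using hW.apply_neg_le_lower_sup_map_pow (l + 1))
    (sup_le (hW.le_apply _) ?_)
  calc S.map (N ^ (l + 1)) = (W (l + 1)).map (N ^ (l + 1)) := by
        rw [hW.apply_eq_upper hl (by push_cast; omega)]
    _ ≤ W ((l + 1) - 2 * (l + 1 : ℕ)) := hW.map_pow_apply_le _ _
    _ = W (-(l + 1)) := by congr 1; push_cast; ring

theorem clamp : IsSubquotientWeightFiltration N (T ⊔ S.map (N ^ (l + 1)))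
    (S ⊓ T.comap (N ^ (l + 1))) (fun m => W (max (-(l + 1)) (min m l))) := by
  have hclamp (m : ℤ) (hm₁ : -((l : ℤ) + 1) ≤ m) (hm₂ : m ≤ l) :
      max (-((l : ℤ) + 1)) (min m l) = m := by
    omega
  refine ⟨fun a b hab => hW.mono (by omega),
    fun m => hW.apply_eq_lower_sup_map hl ▸ hW.mono (by omega),
    fun m => hW.apply_eq_upper_inf_comap hl ▸ hW.mono (by omega),
    ⟨-(l + 1), by rw [hclamp _ (by omega) (by omega), hW.apply_eq_lower_sup_map hl]⟩,
    ⟨l, by rw [hclamp _ (by omega) le_rfl, hW.apply_eq_upper_inf_comap hl]⟩,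
    fun m => (hW.map_apply_le _).trans (hW.mono (by omega)), fun k => ?_, fun k => ?_⟩
  · by_cases hk : k ≤ l
    · rw [hclamp k (by omega) (by omega), hclamp (-k - 1) (by omega) (by omega),
        hclamp (k - 1) (by omega) (by omega)]
      exact hW.inf_comap_le k
    · exact inf_le_left.trans (hW.mono (by omega))
  · by_cases hk : k ≤ l
    · rw [hclamp k (by omega) (by omega), hclamp (-k - 1) (by omega) (by omega),
        hclamp (-k) (by omega) (by omega)]
      exact hW.le_sup_map k
    · exact le_sup_of_le_left (hW.mono (by omega))

theorem extendFiltration_clamp :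
    extendFiltration l T S (fun m => W (max (-(l + 1)) (min m l))) = W := by
  funext m
  unfold extendFiltration
  split_ifs with h₁ h₂
  · exact (hW.apply_eq_lower hl (by omega)).symm
  · exact (hW.apply_eq_upper hl (by omega)).symm
  · exact congrArg W (by omega)

end IsSubquotientWeightFiltration

section Step

variable {N : Module.End R M} {T S : Submodule R M} {l : ℕ}

theorem lower_step_le_upper_step (hTS : T ≤ S) (hT : T.map N ≤ T) (hS : S.map N ≤ S)
    (hl : S.map (N ^ (l + 2)) ≤ T) :
    T ⊔ S.map (N ^ (l + 1)) ≤ S ⊓ T.comap (N ^ (l + 1)) := by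
  refine sup_le
    (le_inf hTS (Submodule.map_le_iff_le_comap.mp (Submodule.map_pow_le_of_map_le hT _)))
    (le_inf (Submodule.map_pow_le_of_map_le hS _) (Submodule.map_le_iff_le_comap.mp ?_))
  calc (S.map (N ^ (l + 1))).map (N ^ (l + 1)) = (S.map (N ^ (l + 2))).map (N ^ l) := by
        rw [← Submodule.map_pow_add, ← Submodule.map_pow_add]; ring_nf
    _ ≤ T := (Submodule.map_mono hl).trans (Submodule.map_pow_le_of_map_le hT _)

theorem map_lower_step_le (hT : T.map N ≤ T) (hl : S.map (N ^ (l + 2)) ≤ T) :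
    (T ⊔ S.map (N ^ (l + 1))).map N ≤ T := by
  rw [Submodule.map_sup, ← Submodule.map_pow_succ']
  exact sup_le hT hl

theorem map_upper_le_upper_step (hS : S.map N ≤ S) (hl : S.map (N ^ (l + 2)) ≤ T) :
    S.map N ≤ S ⊓ T.comap (N ^ (l + 1)) := by
  refine le_inf hS (Submodule.map_le_iff_le_comap.mp ?_)
  rwa [← Submodule.map_pow_succ]

variable {W : ℤ → Submodule R M}
  (hW : IsSubquotientWeightFiltration N (T ⊔ S.map (N ^ (l + 1))) (S ⊓ T.comap (N ^ (l + 1))) W)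
include hW

theorem IsSubquotientWeightFiltration.map_upper_le_apply (hS : S.map N ≤ S)
    (hl : S.map (N ^ (l + 2)) ≤ T) : S.map N ≤ W (l - 1) := by
  have hNl : (S.map N).map (N ^ l) ≤ T ⊔ S.map (N ^ (l + 1)) := by
    rw [← Submodule.map_pow_succ]
    exact le_sup_right
  exact (le_inf (map_upper_le_upper_step hS hl) (Submodule.map_le_iff_le_comap.mp hNl)).trans
    (hW.upper_inf_comap_pow_le l)

theorem IsSubquotientWeightFiltration.map_apply_le_lower (hT : T.map N ≤ T)
    (hl : S.map (N ^ (l + 2)) ≤ T) {m : ℤ} (hm : m ≤ -l) : (W m).map N ≤ T :=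
  calc (W m).map N ≤ (W (-l)).map N := Submodule.map_mono (hW.mono hm)
    _ ≤ ((T ⊔ S.map (N ^ (l + 1))) ⊔ (S ⊓ T.comap (N ^ (l + 1))).map (N ^ l)).map N :=
      Submodule.map_mono (hW.apply_neg_le_lower_sup_map_pow l)
    _ ≤ T := by
      rw [Submodule.map_sup, ← Submodule.map_pow_succ']
      exact sup_le (map_lower_step_le hT hl) (Submodule.map_le_iff_le_comap.mpr inf_le_right)

theorem IsSubquotientWeightFiltration.le_extendFiltration (hTS : T ≤ S) (m : ℤ) :
    T ≤ extendFiltration l T S W m := by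
  unfold extendFiltration
  split_ifs
  exacts [le_rfl, hTS, le_sup_left.trans (hW.le_apply m)]

theorem IsSubquotientWeightFiltration.extendFiltration_le (hTS : T ≤ S) (m : ℤ) :
    extendFiltration l T S W m ≤ S := by
  unfold extendFiltration
  split_ifs
  exacts [hTS, le_rfl, (hW.apply_le m).trans inf_le_left]

theorem IsSubquotientWeightFiltration.map_extendFiltration_le (hT : T.map N ≤ T)
    (hS : S.map N ≤ S) (hl : S.map (N ^ (l + 2)) ≤ T) (m : ℤ) :
    (extendFiltration l T S W m).map N ≤ extendFiltration l T S W (m - 2) := by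
  by_cases h₁ : m < -((l : ℤ) + 1)
  · simp (disch := omega) only [extendFiltration_of_lt]
    exact hT
  by_cases h₂ : (l : ℤ) + 2 < m
  · simp (disch := omega) only [extendFiltration_of_gt]
    exact hS
  by_cases h₃ : (l : ℤ) < m
  · simp (disch := omega) only [extendFiltration_of_gt, extendFiltration_of_mem]
    exact (hW.map_upper_le_apply hS hl).trans (hW.mono (by omega))
  by_cases h₄ : m - 2 < -((l : ℤ) + 1)
  · simp (disch := omega) only [extendFiltration_of_lt, extendFiltration_of_mem]
    exact hW.map_apply_le_lower hT hl (by omega)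
  simp (disch := omega) only [extendFiltration_of_mem]
  exact hW.map_apply_le m

theorem IsSubquotientWeightFiltration.extend (hTS : T ≤ S) (hT : T.map N ≤ T)
    (hS : S.map N ≤ S) (hl : S.map (N ^ (l + 2)) ≤ T) :
    IsSubquotientWeightFiltration N T S (extendFiltration l T S W) := by
  have hl' : (S ⊓ T.comap (N ^ (l + 1))).map (N ^ (l + 1)) ≤ T ⊔ S.map (N ^ (l + 1)) :=
    (Submodule.map_le_iff_le_comap.mpr inf_le_right).trans le_sup_left
  refine ⟨fun a b hab => ?_, hW.le_extendFiltration hTS, hW.extendFiltration_le hTS,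
    ⟨-(l + 2), extendFiltration_of_lt (by omega)⟩,
    ⟨l + 1, extendFiltration_of_gt (by omega)⟩,
    hW.map_extendFiltration_le hT hS hl, fun k => ?_, fun k => ?_⟩
  · by_cases hb : (l : ℤ) < b
    · rw [extendFiltration_of_gt hb]
      exact hW.extendFiltration_le hTS a
    by_cases ha : a < -((l : ℤ) + 1)
    · rw [extendFiltration_of_lt ha]
      exact hW.le_extendFiltration hTS b
    simp (disch := omega) only [extendFiltration_of_mem]
    exact hW.mono hab
  · by_cases h₁ : k ≤ l
    · simp (disch := omega) only [extendFiltration_of_mem]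
      exact hW.inf_comap_le k
    by_cases h₂ : k = l + 1
    · subst h₂
      simp (disch := omega) only [extendFiltration_of_lt, extendFiltration_of_gt,
        extendFiltration_of_mem]
      push_cast
      rw [add_sub_cancel_right, hW.apply_eq_upper hl' (by omega)]
    simp (disch := omega) only [extendFiltration_of_gt]
    exact inf_le_left
  · by_cases h₁ : k ≤ l
    · simp (disch := omega) only [extendFiltration_of_mem]
      exact hW.le_sup_map k
    by_cases h₂ : k = l + 1
    · subst h₂
      simp (disch := omega) only [extendFiltration_of_lt, extendFiltration_of_gt,
        extendFiltration_of_mem]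
      push_cast
      rw [hW.apply_eq_lower hl' (by omega)]
    simp (disch := omega) only [extendFiltration_of_lt]
    exact le_sup_left

end Step

namespace IsSubquotientWeightFiltration

variable {N : Module.End R M} {T S : Submodule R M}

theorem of_map_le (hTS : T ≤ S) (hN : S.map N ≤ T) :
    IsSubquotientWeightFiltration N T S (fun m => if m < 0 then T else S) := by
  have le_apply (m : ℤ) : T ≤ if m < 0 then T else S := by
    split_ifs
    exacts [le_rfl, hTS]
  have apply_le (m : ℤ) : (if m < 0 then T else S) ≤ S := by
    split_ifs
    exacts [hTS, le_rfl]
  refine ⟨fun a b hab => ?_, le_apply, apply_le, ⟨-1, if_pos (by omega)⟩,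
    ⟨0, if_neg (by omega)⟩,
    fun m => ((Submodule.map_mono (apply_le m)).trans hN).trans (le_apply _), fun k => ?_,
    fun k => ?_⟩
  · split_ifs <;> first | exact le_rfl | exact hTS | omega
  · rcases k with _ | k
    · simp [Module.End.one_eq_id]
    · simp (disch := omega) only [if_neg]
      exact inf_le_left
  · rcases k with _ | k
    · simp [Module.End.one_eq_id]
    · simp (disch := omega) only [if_pos]
      exact le_sup_left

theorem existsUnique (l : ℕ) (hTS : T ≤ S) (hT : T.map N ≤ T) (hS : S.map N ≤ S)
    (hl : S.map (N ^ (l + 1)) ≤ T) : ∃! W, IsSubquotientWeightFiltration N T S W := by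
  induction l generalizing T S with
  | zero =>
    rw [zero_add, pow_one] at hl
    refine ⟨_, of_map_le hTS hl, fun W hW => funext fun m => ?_⟩
    split_ifs with hm
    · exact hW.apply_eq_lower (n := 1) (by rwa [pow_one]) (by omega)
    · exact hW.apply_eq_upper (n := 1) (by rwa [pow_one]) (by omega)
  | succ l ih =>
    obtain ⟨W₁, hW₁, hW₁_unique⟩ := ih (lower_step_le_upper_step hTS hT hS hl)
      ((map_lower_step_le hT hl).trans le_sup_left)
      ((Submodule.map_mono inf_le_left).trans (map_upper_le_upper_step hS hl))
      ((Submodule.map_le_iff_le_comap.mpr inf_le_right).trans le_sup_left)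
    refine ⟨_, hW₁.extend hTS hT hS hl, fun W hW => ?_⟩
    rw [← hW.extendFiltration_clamp hl, hW₁_unique _ (hW.clamp hl)]

end IsSubquotientWeightFiltration

end Subquotient

theorem isWeightFiltration_iff {K V : Type*} [Field K] [AddCommGroup V] [Module K V]
    {N : V →ₗ[K] V} {W : ℤ → Submodule K V} :
    IsWeightFiltration N W ↔ IsSubquotientWeightFiltration N ⊥ ⊤ W :=
  ⟨fun ⟨mono, hbot, htop, hmap, hgr⟩ => ⟨mono, fun _ => bot_le, fun _ => le_top, hbot, htop,
      hmap, fun k => (hgr k).1, fun k => (hgr k).2⟩,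
    fun hW => ⟨hW.mono, hW.exists_eq_lower, hW.exists_eq_upper, hW.map_apply_le,
      fun k => ⟨hW.inf_comap_le k, hW.le_sup_map k⟩⟩⟩

theorem stmt4_general {K V : Type*} [Field K] [AddCommGroup V] [Module K V]
    (N : V →ₗ[K] V) (hN : IsNilpotent N) :
    ∃! W : ℤ → Submodule K V, IsWeightFiltration N W := by
  obtain ⟨n, hn⟩ := hN
  simp_rw [isWeightFiltration_iff]
  exact IsSubquotientWeightFiltration.existsUnique n bot_le (by simp) le_top
    (by rw [pow_succ, hn, zero_mul, Submodule.map_zero])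

theorem stmt4 {K V : Type*} [Field K] [CharZero K] [AddCommGroup V] [Module K V]
    [FiniteDimensional K V] (N : V →ₗ[K] V) (hN : IsNilpotent N) :
    ∃! W : ℤ → Submodule K V, IsWeightFiltration N W :=
  stmt4_general N hN
end

section
/- Let N₁, N₂ be the endomorphisms of ℝ⁶ given on the standard basis by N₁: e₃ ↦ e₁, e₄ ↦ e₂, e₅ ↦ e₃, e₆ ↦ e₄ (e₁, e₂ ↦ 0), and N₂: e₃ ↦ e₁ + e₂, e₄ ↦ e₁ − e₂, e₅ ↦ e₃ + e₄, e₆ ↦ e₃ − e₄ (e₁, e₂ ↦ 0). For real numbers a, b > 0 with a² ≠ 2b², set N = aN₁ + bN₂. Then ker N = image(N²) = span(e₁, e₂), and image(N) = ker(N²) = span(e₁, e₂, e₃, e₄). -/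
/-- `N₁ : e₃ ↦ e₁, e₄ ↦ e₂, e₅ ↦ e₃, e₆ ↦ e₄` (and `e₁, e₂ ↦ 0`). -/
def N1 : (Fin 6 → ℝ) →ₗ[ℝ] (Fin 6 → ℝ) :=
  Matrix.mulVecLin
    !![0,0,1,0,0,0; 0,0,0,1,0,0; 0,0,0,0,1,0; 0,0,0,0,0,1; 0,0,0,0,0,0; 0,0,0,0,0,0]

/-- `N₂ : e₃ ↦ e₁+e₂, e₄ ↦ e₁−e₂, e₅ ↦ e₃+e₄, e₆ ↦ e₃−e₄` (and `e₁, e₂ ↦ 0`). -/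
def N2 : (Fin 6 → ℝ) →ₗ[ℝ] (Fin 6 → ℝ) :=
  Matrix.mulVecLin
    !![0,0,1,1,0,0; 0,0,1,-1,0,0; 0,0,0,0,1,1; 0,0,0,0,1,-1; 0,0,0,0,0,0; 0,0,0,0,0,0]

/-- span of `e₁, e₂`. -/
noncomputable def span2 : Submodule ℝ (Fin 6 → ℝ) :=
  Submodule.span ℝ {Pi.single 0 1, Pi.single 1 1}

/-- span of `e₁, e₂, e₃, e₄`. -/
noncomputable def span4 : Submodule ℝ (Fin 6 → ℝ) :=
  Submodule.span ℝ {Pi.single 0 1, Pi.single 1 1, Pi.single 2 1, Pi.single 3 1}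

lemma cons_val_five' {α : Type*} (p q r s t u : α) : ![p,q,r,s,t,u] 5 = u := rfl

lemma Napp (a b : ℝ) (x : Fin 6 → ℝ) : (a • N1 + b • N2) x =
    ![(a+b)*x 2 + b*x 3, b*x 2 + (a-b)*x 3, (a+b)*x 4 + b*x 5, b*x 4 + (a-b)*x 5, 0, 0] := by
  funext i
  fin_cases i <;>
  · simp [N1, N2, Matrix.mulVecLin_apply, Matrix.mulVec, dotProduct, Fin.sum_univ_six,
      Matrix.vecHead, Matrix.vecTail, cons_val_five']
    try ring

lemma mem_span2 (x : Fin 6 → ℝ) (h2 : x 2 = 0) (h3 : x 3 = 0) (h4 : x 4 = 0) (h5 : x 5 = 0) :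
    x ∈ span2 := by
  have hx : x = x 0 • (Pi.single 0 1 : Fin 6 → ℝ) + x 1 • (Pi.single 1 1 : Fin 6 → ℝ) := by
    funext i
    fin_cases i <;> simp [h2, h3, h4, h5, Pi.single_apply]
  rw [hx]
  exact add_mem (Submodule.smul_mem _ _ (Submodule.subset_span (by simp)))
    (Submodule.smul_mem _ _ (Submodule.subset_span (by simp)))

lemma mem_span4 (x : Fin 6 → ℝ) (h4 : x 4 = 0) (h5 : x 5 = 0) : x ∈ span4 := by
  have hx : x = x 0 • (Pi.single 0 1 : Fin 6 → ℝ) + x 1 • (Pi.single 1 1 : Fin 6 → ℝ)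
      + x 2 • (Pi.single 2 1 : Fin 6 → ℝ) + x 3 • (Pi.single 3 1 : Fin 6 → ℝ) := by
    funext i
    fin_cases i <;> simp [h4, h5, Pi.single_apply]
  rw [hx]
  refine add_mem (add_mem (add_mem ?_ ?_) ?_) ?_ <;>
    exact Submodule.smul_mem _ _ (Submodule.subset_span (by simp))

set_option maxHeartbeats 1000000 in
theorem stmt13 (a b : ℝ) (ha : 0 < a) (hb : 0 < b) (hab : a ^ 2 ≠ 2 * b ^ 2) :
    LinearMap.ker (a • N1 + b • N2) = LinearMap.range ((a • N1 + b • N2) ∘ₗ (a • N1 + b • N2)) ∧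
    LinearMap.ker (a • N1 + b • N2) = span2 ∧
    LinearMap.range (a • N1 + b • N2) = LinearMap.ker ((a • N1 + b • N2) ∘ₗ (a • N1 + b • N2)) ∧
    LinearMap.range (a • N1 + b • N2) = span4 := by
  have hd : a ^ 2 - 2 * b ^ 2 ≠ 0 := sub_ne_zero.mpr hab
  -- kernel of (a • N1 + b • N2) = span2
  have hker : LinearMap.ker (a • N1 + b • N2) = span2 := by
    apply le_antisymm
    · intro x hx
      rw [LinearMap.mem_ker, Napp] at hx
      have e0 := congrFun hx 0
      have e1 := congrFun hx 1
      have e2 := congrFun hx 2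
      have e3 := congrFun hx 3
      simp [cons_val_five'] at e0 e1 e2 e3
      have h2 : x 2 = 0 := by
        have h : (a ^ 2 - 2 * b ^ 2) * x 2 = 0 := by linear_combination (a - b) * e0 - b * e1
        exact (mul_eq_zero.mp h).resolve_left hd
      have h3 : x 3 = 0 := by
        have h : (a ^ 2 - 2 * b ^ 2) * x 3 = 0 := by linear_combination (a + b) * e1 - b * e0
        exact (mul_eq_zero.mp h).resolve_left hd
      have h4 : x 4 = 0 := by
        have h : (a ^ 2 - 2 * b ^ 2) * x 4 = 0 := by linear_combination (a - b) * e2 - b * e3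
        exact (mul_eq_zero.mp h).resolve_left hd
      have h5 : x 5 = 0 := by
        have h : (a ^ 2 - 2 * b ^ 2) * x 5 = 0 := by linear_combination (a + b) * e3 - b * e2
        exact (mul_eq_zero.mp h).resolve_left hd
      exact mem_span2 x h2 h3 h4 h5
    · rw [span2, Submodule.span_le]
      rintro y (rfl | rfl) <;>
      · simp only [SetLike.mem_coe, LinearMap.mem_ker, Napp]
        funext i
        fin_cases i <;> simp [Pi.single_apply, cons_val_five']
  -- range of (a • N1 + b • N2) = span4
  have hrange : LinearMap.range (a • N1 + b • N2) = span4 := by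
    apply le_antisymm
    · rintro _ ⟨x, rfl⟩
      refine mem_span4 _ ?_ ?_ <;> rw [Napp] <;> simp [cons_val_five']
    · rw [span4, Submodule.span_le]
      have key : ∀ u v : ℝ, (∃ y : Fin 6 → ℝ, (a • N1 + b • N2) y = ![u, v, 0, 0, 0, 0]) ∧
          (∃ y : Fin 6 → ℝ, (a • N1 + b • N2) y = ![0, 0, u, v, 0, 0]) := by
        intro u v
        set d := a ^ 2 - 2 * b ^ 2 with hdd
        constructor
        · refine ⟨![0, 0, ((a-b)*u - b*v)/d, ((a+b)*v - b*u)/d, 0, 0], ?_⟩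
          rw [Napp]
          funext i
          fin_cases i <;> simp [cons_val_five'] <;> field_simp <;> ring
        · refine ⟨![0, 0, 0, 0, ((a-b)*u - b*v)/d, ((a+b)*v - b*u)/d], ?_⟩
          rw [Napp]
          funext i
          fin_cases i <;> simp [cons_val_five'] <;> field_simp <;> ring
      rintro y (rfl | rfl | rfl | rfl)
      · obtain ⟨x, hx⟩ := (key 1 0).1
        exact ⟨x, by rw [hx]; funext i; fin_cases i <;> simp [Pi.single_apply, cons_val_five']⟩
      · obtain ⟨x, hx⟩ := (key 0 1).1
        exact ⟨x, by rw [hx]; funext i; fin_cases i <;> simp [Pi.single_apply, cons_val_five']⟩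
      · obtain ⟨x, hx⟩ := (key 1 0).2
        exact ⟨x, by rw [hx]; funext i; fin_cases i <;> simp [Pi.single_apply, cons_val_five']⟩
      · obtain ⟨x, hx⟩ := (key 0 1).2
        exact ⟨x, by rw [hx]; funext i; fin_cases i <;> simp [Pi.single_apply, cons_val_five']⟩
  -- N² applied
  have hN2app : ∀ x : Fin 6 → ℝ, ((a • N1 + b • N2) ∘ₗ (a • N1 + b • N2)) x =
      ![((a+b)^2 + b^2)*x 4 + 2*a*b*x 5, 2*a*b*x 4 + (b^2 + (a-b)^2)*x 5, 0, 0, 0, 0] := by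
    intro x
    show (a • N1 + b • N2) ((a • N1 + b • N2) x) = _
    rw [Napp, Napp]
    funext i
    fin_cases i <;> · simp [cons_val_five']; try ring
  have hd2 : (a ^ 2 - 2 * b ^ 2) ^ 2 ≠ 0 := pow_ne_zero _ hd
  -- range N² = span2
  have hr2 : LinearMap.range ((a • N1 + b • N2) ∘ₗ (a • N1 + b • N2)) = span2 := by
    apply le_antisymm
    · rintro _ ⟨x, rfl⟩
      refine mem_span2 _ ?_ ?_ ?_ ?_ <;> rw [hN2app] <;> simp [cons_val_five']
    · rw [span2, Submodule.span_le]
      have key : ∀ u v : ℝ, ∃ y : Fin 6 → ℝ, ((a • N1 + b • N2) ∘ₗ (a • N1 + b • N2)) y = ![u, v, 0, 0, 0, 0] := by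
        intro u v
        set D := (a ^ 2 - 2 * b ^ 2) ^ 2 with hD
        refine ⟨![0, 0, 0, 0, ((b^2+(a-b)^2)*u - 2*a*b*v)/D, (((a+b)^2+b^2)*v - 2*a*b*u)/D], ?_⟩
        rw [hN2app]
        funext i
        fin_cases i <;> · simp [cons_val_five']; try field_simp; try ring
      rintro y (rfl | rfl)
      · obtain ⟨x, hx⟩ := key 1 0
        exact ⟨x, by rw [hx]; funext i; fin_cases i <;> simp [Pi.single_apply, cons_val_five']⟩
      · obtain ⟨x, hx⟩ := key 0 1
        exact ⟨x, by rw [hx]; funext i; fin_cases i <;> simp [Pi.single_apply, cons_val_five']⟩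
  -- ker N² = span4
  have hk2 : LinearMap.ker ((a • N1 + b • N2) ∘ₗ (a • N1 + b • N2)) = span4 := by
    apply le_antisymm
    · intro x hx
      rw [LinearMap.mem_ker, hN2app] at hx
      have e0 := congrFun hx 0
      have e1 := congrFun hx 1
      simp [cons_val_five'] at e0 e1
      have h4 : x 4 = 0 := by
        have h : (a ^ 2 - 2 * b ^ 2) ^ 2 * x 4 = 0 := by
          linear_combination (b^2 + (a-b)^2) * e0 - 2*a*b * e1
        exact (mul_eq_zero.mp h).resolve_left hd2
      have h5 : x 5 = 0 := by
        have h : (a ^ 2 - 2 * b ^ 2) ^ 2 * x 5 = 0 := by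
          linear_combination ((a+b)^2 + b^2) * e1 - 2*a*b * e0
        exact (mul_eq_zero.mp h).resolve_left hd2
      exact mem_span4 x h4 h5
    · rw [span4, Submodule.span_le]
      rintro y (rfl | rfl | rfl | rfl) <;>
      · simp only [SetLike.mem_coe, LinearMap.mem_ker, hN2app]
        funext i
        fin_cases i <;> simp [Pi.single_apply, cons_val_five']
  exact ⟨hker.trans hr2.symm, hker, hrange.trans hk2.symm, hrange⟩
end

section
/- Let V be a finite-dimensional vector space over a field of characteristic 0, B a nondegenerate symmetric bilinear form on V, and N a nilpotent endomorphism with B(Nx, y) + B(x, Ny) = 0 for all x, y. Then the monodromy weight filtration W of N is self-dual with respect to B: the orthogonal complement of W_m equals W_{-m-1} for all m ∈ ℤ. -/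
/-!
The inclusion `W (-m-1) ⊆ (W m)ᗮ` follows by induction on the weights: the surjectivity
condition gives `W (-k) = W (-k-1) + N ^ k (W k)`, and since `N` is skew-adjoint, `N ^ k`
can be moved across `B` at the cost of shifting the weights. Equality then follows by
counting dimensions: the isomorphisms `gr_k ≅ gr_{-k}` give
`dim W m + dim W (-m-1) = dim V`, which is also `dim W m + dim (W m)ᗮ` since `B` is
nondegenerate.
-/

open Module Submodule LinearMap

theorem LinearMap.IsAdjointPair.pow {R M M' : Type*} [CommSemiring R] [AddCommMonoid M]
    [Module R M] [AddCommMonoid M'] [Module R M'] {B : M →ₗ[R] M →ₗ[R] M'}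
    {f g : Module.End R M} (h : IsAdjointPair B B f g) (k : ℕ) :
    IsAdjointPair B B ⇑(f ^ k) ⇑(g ^ k) := by
  induction k with
  | zero => exact isAdjointPair_one
  | succ k ih => rw [pow_succ, pow_succ']; exact ih.mul h

theorem Submodule.map_pow_le_of_forall_map_le {R M : Type*} [Semiring R] [AddCommMonoid M]
    [Module R M] {f : Module.End R M} {W : ℤ → Submodule R M} {d : ℤ}
    (h : ∀ m, (W m).map f ≤ W (m - d)) (k : ℕ) (m : ℤ) :
    (W m).map (f ^ k) ≤ W (m - k * d) := by
  induction k with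
  | zero => simp [Module.End.one_eq_id]
  | succ k ih =>
    rw [pow_succ', Module.End.mul_eq_comp, map_comp]
    refine (map_mono ih).trans ((h _).trans_eq ?_)
    congr 1
    push_cast
    ring

/-- `hinj` and `hsurj` say that `f` induces an isomorphism `A / A' ≃ C / C'`. -/
theorem Submodule.finrank_add_finrank_eq_of_induces_equiv {K V V' : Type*} [Field K]
    [AddCommGroup V] [Module K V] [AddCommGroup V'] [Module K V'] [FiniteDimensional K V]
    [FiniteDimensional K V'] (f : V →ₗ[K] V')
    {A' A : Submodule K V} {C' C : Submodule K V'} (hA : A' ≤ A) (hC : C' ≤ C)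
    (hfA : A.map f ≤ C) (hfA' : A'.map f ≤ C') (hinj : A ⊓ C'.comap f ≤ A')
    (hsurj : C ≤ C' ⊔ A.map f) :
    finrank K A + finrank K C' = finrank K A' + finrank K C := by
  set g := C'.mkQ ∘ₗ f ∘ₗ A.subtype
  set h := C'.mkQ ∘ₗ C.subtype
  have hker_g : ker g = A'.comap A.subtype := by
    ext ⟨x, hx⟩
    simp only [g, mem_ker, coe_comp, Function.comp_apply, mkQ_apply, Quotient.mk_eq_zero,
      mem_comap, subtype_apply]
    exact ⟨fun hfx ↦ hinj ⟨hx, hfx⟩, fun hx' ↦ hfA' ⟨x, hx', rfl⟩⟩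
  have hker_h : ker h = C'.comap C.subtype := by
    ext
    simp [h, Quotient.mk_eq_zero]
  have hrange : range g = range h := by
    simp only [g, h, range_comp, range_subtype]
    refine le_antisymm (map_mono hfA) ?_
    simpa [map_sup, mkQ_map_self] using map_mono (f := C'.mkQ) hsurj
  have hg := finrank_range_add_finrank_ker g
  have hh := finrank_range_add_finrank_ker h
  rw [hker_g, (comapSubtypeEquivOfLe hA).finrank_eq] at hg
  rw [hker_h, (comapSubtypeEquivOfLe hC).finrank_eq, ← hrange] at hh
  omega

namespace IsWeightFiltration

variable {K V : Type*} [Field K] [AddCommGroup V] [Module K V] {N : V →ₗ[K] V}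
  {W : ℤ → Submodule K V}

theorem map_pow_le (hW : IsWeightFiltration N W) (k : ℕ) (m : ℤ) :
    (W m).map (N ^ k) ≤ W (m - 2 * k) := by
  simpa [mul_comm] using map_pow_le_of_forall_map_le hW.2.2.2.1 k m

theorem apply_eq_zero_of_add_le_neg_one (hW : IsWeightFiltration N W)
    {B : V →ₗ[K] V →ₗ[K] K} (hsymm : ∀ x y, B x y = B y x)
    (hinf : ∀ x y, B (N x) y + B x (N y) = 0) {m m' : ℤ} (hmm' : m + m' ≤ -1) :
    ∀ x ∈ W m, ∀ y ∈ W m', B x y = 0 := by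
  obtain ⟨hmono, ⟨m₀, hm₀⟩, -, hmap, hgr⟩ := hW
  have hadj : IsAdjointPair B B ⇑(-N) ⇑N := fun x y ↦ by
    simpa [neg_eq_iff_add_eq_zero] using hinf x y
  have hmap_neg (m : ℤ) : (W m).map (-N) ≤ W (m - 2) :=
    (Submodule.map_neg (W m) N).trans_le (hmap m)
  suffices key : ∀ n, m₀ ≤ n → ∀ m' ≤ n, ∀ m, m + m' ≤ -1 →
      ∀ x ∈ W m, ∀ y ∈ W m', B x y = 0 from
    key (max m' m₀) (le_max_right _ _) m' (le_max_left _ _) m hmm'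
  intro n hn
  induction n, hn using Int.leInduction with
  | base =>
    intro m' hm' m _ x _ y hy
    rw [(Submodule.eq_bot_iff _).1 hm₀ y (hmono hm' hy), map_zero]
  | succ n _ ih =>
    intro m' hm' m hmm' x hx y hy
    obtain hm' | rfl := hm'.lt_or_eq
    · exact ih m' (by omega) m hmm' x hx y hy
    obtain hpos | hneg := le_or_gt 0 (n + 1)
    · rw [hsymm]
      exact ih m (by omega) (n + 1) (by omega) y hy x hx
    -- With `k = -(n + 1)`, write `y = a + N ^ k z` with `a ∈ W n`, `z ∈ W k`; then
    -- `B x (N ^ k z) = B ((-N) ^ k x) z` and `(-N) ^ k x` has weight `m + 2 (n + 1) ≤ n`.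
    obtain ⟨k, hk⟩ : ∃ k : ℕ, (k : ℤ) = -(n + 1) :=
      ⟨_, Int.toNat_of_nonneg (by omega)⟩
    have hdec := (hgr k).2
    rw [hk, neg_neg, add_sub_cancel_right] at hdec
    obtain ⟨a, ha, _, ⟨z, hz, rfl⟩, rfl⟩ := mem_sup.1 (hdec hy)
    have hNx : ((-N) ^ k) x ∈ W (m - k * 2) :=
      map_pow_le_of_forall_map_le hmap_neg k m ⟨x, hx, rfl⟩
    rw [map_add, ih n le_rfl m (by omega) x hx a ha, ← hadj.pow k, hsymm,
      ih _ (by omega) _ (by omega) z hz _ hNx, add_zero]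

theorem finrank_gr_eq [FiniteDimensional K V] (hW : IsWeightFiltration N W) (k : ℕ) :
    finrank K (W k) + finrank K (W (-k - 1)) = finrank K (W (k - 1)) + finrank K (W (-k)) := by
  refine finrank_add_finrank_eq_of_induces_equiv (N ^ k) (hW.1 (by omega)) (hW.1 (by omega))
    ((hW.map_pow_le k k).trans_eq ?_) ((hW.map_pow_le k (k - 1)).trans_eq ?_)
    (hW.2.2.2.2 k).1 (hW.2.2.2.2 k).2 <;> congr 1 <;> ring

theorem finrank_add_finrank_neg_sub_one [FiniteDimensional K V] (hW : IsWeightFiltration N W)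
    (m : ℤ) : finrank K (W m) + finrank K (W (-m - 1)) = finrank K V := by
  let s (m : ℤ) : ℕ := finrank K (W m) + finrank K (W (-m - 1))
  have hs_succ (k : ℕ) : s (k + 1) = s k := by
    have h := hW.finrank_gr_eq (k + 1)
    rw [Nat.cast_succ, add_sub_cancel_right, neg_add'] at h
    simp only [s]
    rwa [neg_add']
  have hs_zero (k : ℕ) : s k = s 0 := by
    induction k with
    | zero => rfl
    | succ k ih => rw [Nat.cast_succ, hs_succ, ih]
  obtain ⟨hmono, ⟨a, ha⟩, ⟨b, hb⟩, -⟩ := hW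
  have hs_large : s (max b (-a)).toNat = finrank K V := by
    have htop : W (max b (-a)).toNat = ⊤ := eq_top_iff.2 (hb ▸ hmono (by omega))
    have hbot : W (-(max b (-a)).toNat - 1) = ⊥ := eq_bot_iff.2 (ha ▸ hmono (by omega))
    simp only [s]
    rw [htop, hbot, finrank_top, finrank_bot, add_zero]
  have hs_nat (k : ℕ) : s k = finrank K V := by rw [hs_zero, ← hs_zero, hs_large]
  change s m = _
  obtain hm | hm := le_or_gt 0 m
  · lift m to ℕ using hm
    exact hs_nat m
  · have hs_neg : s (-m - 1) = s m := by
      simp only [s]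
      rw [show -(-m - 1) - 1 = m by ring, add_comm]
    lift -m - 1 to ℕ using (by omega) with k
    rw [← hs_neg, hs_nat]

end IsWeightFiltration

theorem stmt17_general {K V : Type*} [Field K] [AddCommGroup V] [Module K V]
    [FiniteDimensional K V] (B : V →ₗ[K] V →ₗ[K] K)
    (hsymm : ∀ x y : V, B x y = B y x)
    (hnondeg : ∀ x : V, (∀ y : V, B x y = 0) → x = 0)
    (N : V →ₗ[K] V)
    (hinf : ∀ x y : V, B (N x) y + B x (N y) = 0)
    (W : ℤ → Submodule K V) (hW : IsWeightFiltration N W) :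
    ∀ (m : ℤ) (x : V), (∀ u ∈ W m, B x u = 0) ↔ x ∈ W (-m - 1) := by
  intro m x
  have hker : ker B = ⊥ :=
    ker_eq_bot'.2 fun x hx ↦ hnondeg x fun y ↦ by rw [hx, LinearMap.zero_apply]
  have hdim := BilinForm.finrank_add_finrank_orthogonal' (B := B) (W m)
  rw [hker, inf_bot_eq, finrank_bot, add_zero, ← hW.finrank_add_finrank_neg_sub_one m] at hdim
  have hle : W (-m - 1) ≤ BilinForm.orthogonal B (W m) := fun y hy u hu ↦
    hW.apply_eq_zero_of_add_le_neg_one hsymm hinf (by omega) u hu y hy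
  rw [eq_of_le_of_finrank_le hle (by omega), BilinForm.mem_orthogonal_iff]
  simp only [hsymm x]

/-- The monodromy weight filtration of a nilpotent infinitesimal isometry of a
nondegenerate symmetric bilinear form is self-dual: the `B`-orthogonal
complement of `W m` equals `W (-m-1)`. -/
theorem stmt17 {K V : Type*} [Field K] [CharZero K] [AddCommGroup V] [Module K V]
    [FiniteDimensional K V] (B : V →ₗ[K] V →ₗ[K] K)
    (hsymm : ∀ x y : V, B x y = B y x)
    (hnondeg : ∀ x : V, (∀ y : V, B x y = 0) → x = 0)
    (N : V →ₗ[K] V) (hN : IsNilpotent N)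
    (hinf : ∀ x y : V, B (N x) y + B x (N y) = 0)
    (W : ℤ → Submodule K V) (hW : IsWeightFiltration N W) :
    ∀ (m : ℤ) (x : V), (∀ u ∈ W m, B x u = 0) ↔ x ∈ W (-m - 1) :=
  stmt17_general B hsymm hnondeg N hinf W hW
end
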